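/- arXiv:1511.08009 — 2 statements merged into one kernel-verified Lean document; each statement's English description precedes it below -/
import Mathlib

section
/- Let C be a planar convex body that is k_C-rotationally symmetric about a point p in its interior, where k_C is an even integer greater than 2, and assume C is not a closed disk centered at p. Then for every divisor k > 2 of k_C one has d_M(P_2) > d_M(P_k); that is, diam(C ∩ H) > diam(C ∩ S_k). In particular, if k_1 = 2 < k_2 < … < k_n = k_C are the divisors of k_C greater than 1, then d_M(P_2) > d_M(P_{k_2}) ≥ … ≥ d_M(P_{k_n}). -/
open Metric Set

/-- Rotation of angle `α` about the point `p` in the plane `ℂ`. -/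
noncomputable def rot (p : ℂ) (α : ℝ) : ℂ → ℂ :=
  fun z => p + Complex.exp (α * Complex.I) * (z - p)

/-- A planar convex body: a compact convex subset of the plane with nonempty interior. -/
def IsConvexBody (C : Set ℂ) : Prop :=
  IsCompact C ∧ Convex ℝ C ∧ (interior C).Nonempty

/-- `C` is `k`-rotationally symmetric about `p`: the rotation of angle `2π/k`
about `p` maps `C` onto itself. -/
def IsRotSym (C : Set ℂ) (p : ℂ) (k : ℕ) : Prop :=
  rot p (2 * Real.pi / k) '' C = C

/-- The closed convex sector at `p` spanned by `x - p` and `ρ_k(x) - p`. -/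
noncomputable def sector (p x : ℂ) (k : ℕ) : Set ℂ :=
  {z | ∃ a b : ℝ, 0 ≤ a ∧ 0 ≤ b ∧
    z = p + (a : ℂ) * (x - p) + (b : ℂ) * (rot p (2 * Real.pi / k) x - p)}

/-- The maximum relative diameter of the standard `k`-partition of `C`
(with center `p` and endpoint `x`): the diameter of one piece `C ∩ S_k`. -/
noncomputable def dM (C : Set ℂ) (p x : ℂ) (k : ℕ) : ℝ :=
  Metric.diam (C ∩ sector p x k)

/-- The circumradius of `C` with respect to `p`: `sup_{y ∈ C} dist p y`. -/
noncomputable def circumrad (C : Set ℂ) (p : ℂ) : ℝ :=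
  ⨆ y ∈ C, dist p y

/-! The disc of radius `r = ‖x - p‖` about `p` lies in `C`, so `x` and all its rotates under the
symmetries of `C` are touching points of support lines perpendicular to the radii: every `z ∈ C`
satisfies `⟪ρ x - p, z - p⟫ ≤ r²`. Writing a point of the sector as `p + (a + b e^{iθ})(x - p)`,
the support lines at `x` and `ρ_k x` confine the piece `C ∩ S_k` to a region of diameter at most
`√(2 + 2 cos θ) r < 2r` when `k ≥ 4`; for `k = 3` the support line at the rotate of `x` by `π/3`
(a symmetry, since `6 ∣ k_C`) cuts it down to diameter `√3 r`. The half-plane piece contains `x`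
and its antipode `2p - x`, at distance `2r`. -/

open ComplexConjugate

theorem rot_sub_self (p : ℂ) (α : ℝ) (z : ℂ) :
    rot p α z - p = Complex.exp (α * Complex.I) * (z - p) := by
  simp only [rot, add_sub_cancel_left]

theorem rot_zero_image (p : ℂ) (C : Set ℂ) : rot p 0 '' C = C := by
  have hid : rot p 0 = id := funext fun z => by simp [rot]
  rw [hid, image_id]

theorem rot_iterate (p : ℂ) (α : ℝ) (n : ℕ) : (rot p α)^[n] = rot p (n * α) := by
  induction n with
  | zero => funext z; simp [rot]
  | succ n ih =>
    funext z
    rw [Function.iterate_succ_apply', ih]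
    simp only [rot, add_sub_cancel_left, ← mul_assoc, ← Complex.exp_add]
    push_cast
    ring_nf

theorem IsRotSym.of_dvd {C : Set ℂ} {p : ℂ} {k d : ℕ} (hsym : IsRotSym C p k) (hk : 0 < k)
    (hd : d ∣ k) : IsRotSym C p d := by
  obtain ⟨m, rfl⟩ := hd
  have hd0 : (d : ℝ) ≠ 0 := by exact_mod_cast (Nat.pos_of_mul_pos_right hk).ne'
  have hm0 : (m : ℝ) ≠ 0 := by exact_mod_cast (Nat.pos_of_mul_pos_left hk).ne'
  have hangle : 2 * Real.pi / d = m * (2 * Real.pi / ↑(d * m)) := by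
    push_cast
    field_simp
  rw [IsRotSym, hangle, ← rot_iterate, image_iterate_eq]
  exact Function.iterate_fixed hsym m

theorem inner_rot_sub_rot_sub (p : ℂ) (α : ℝ) (z w : ℂ) :
    inner ℝ (rot p α z - p) (rot p α w - p) = inner ℝ (z - p) (w - p) := by
  simp only [rot_sub_self, ← Circle.coe_exp, ← rotation_apply, LinearIsometryEquiv.inner_map_map]

theorem inner_mul_mul_self (u v X : ℂ) : inner ℝ (u * X) (v * X) = inner ℝ u v * ‖X‖ ^ 2 := by
  simp only [Complex.inner, map_mul, Complex.sq_norm]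
  rw [show v * X * (conj u * conj X) = v * conj u * (conj X * X) by ring,
    ← Complex.normSq_eq_conj_mul_self, Complex.re_mul_ofReal]

theorem inner_exp_add_mul_exp (α θ a b : ℝ) :
    inner ℝ (Complex.exp (α * Complex.I)) (a + b * Complex.exp (θ * Complex.I)) =
      a * Real.cos α + b * Real.cos (θ - α) := by
  simp only [Complex.inner, Complex.mul_re, Complex.add_re, Complex.add_im, Complex.mul_im,
    Complex.conj_re, Complex.conj_im, Complex.ofReal_re, Complex.ofReal_im,
    Complex.exp_ofReal_mul_I_re, Complex.exp_ofReal_mul_I_im, Real.cos_sub]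
  ring

theorem norm_add_mul_exp_sq (θ a b : ℝ) :
    ‖(a : ℂ) + b * Complex.exp (θ * Complex.I)‖ ^ 2 = a ^ 2 + b ^ 2 + 2 * Real.cos θ * a * b := by
  simp only [Complex.sq_norm, Complex.normSq_apply, Complex.mul_re, Complex.add_re,
    Complex.add_im, Complex.mul_im, Complex.ofReal_re, Complex.ofReal_im,
    Complex.exp_ofReal_mul_I_re, Complex.exp_ofReal_mul_I_im]
  linear_combination b ^ 2 * Real.sin_sq_add_cos_sq θ

theorem inner_sub_le_norm_sq_of_ball_subset {E : Type*} [NormedAddCommGroup E]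
    [InnerProductSpace ℝ E] {C : Set E} (hC : Convex ℝ C) {p w z : E}
    (hball : ball p ‖w - p‖ ⊆ C) (hw : w ∉ interior C) (hz : z ∈ C) :
    inner ℝ (w - p) (z - p) ≤ ‖w - p‖ ^ 2 := by
  by_contra! hlt
  set γ := inner ℝ (w - p) (z - p) - ‖w - p‖ ^ 2
  have hγ : 0 < γ := sub_pos.2 hlt
  have hwz : inner ℝ (w - p) (w - z) = -γ := by
    rw [show w - z = (w - p) - (z - p) by abel, inner_sub_right, real_inner_self_eq_norm_sq]
    ring
  have hwz0 : 0 < ‖w - z‖ := norm_pos_iff.2 fun h => by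
    rw [sub_eq_zero.1 h, sub_self, inner_zero_right] at hwz; linarith
  -- pushing `w` slightly away from `z` lands in the open ball, so `w` is inside a segment
  -- from an interior point to `z`
  set s := γ / ‖w - z‖ ^ 2
  have hs : 0 < s := by positivity
  have hq : w + s • (w - z) ∈ interior C := by
    refine interior_maximal hball isOpen_ball ?_
    rw [mem_ball, dist_eq_norm, ← sq_lt_sq₀ (norm_nonneg _) (norm_nonneg _),
      show w + s • (w - z) - p = (w - p) + s • (w - z) by abel, norm_add_sq_real,
      inner_smul_right, norm_smul, mul_pow, Real.norm_eq_abs, sq_abs, hwz]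
    have : s ^ 2 * ‖w - z‖ ^ 2 = s * γ := by
      simp only [s]; field_simp
    nlinarith
  refine hw (hC.openSegment_interior_self_subset_interior hq hz ?_)
  refine ⟨1 / (1 + s), s / (1 + s), by positivity, by positivity, by field_simp, ?_⟩
  match_scalars <;> field_simp
  ring

section Support

variable {C : Set ℂ} {p x : ℂ}

theorem inner_rot_sub_le (hsupp : ∀ z ∈ C, inner ℝ (x - p) (z - p) ≤ ‖x - p‖ ^ 2) {α : ℝ}
    (hα : rot p α '' C = C) {z : ℂ} (hz : z ∈ C) :
    inner ℝ (rot p α x - p) (z - p) ≤ ‖x - p‖ ^ 2 := by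
  rw [← hα] at hz
  obtain ⟨z', hz', rfl⟩ := hz
  rw [inner_rot_sub_rot_sub]
  exact hsupp z' hz'

theorem mul_cos_add_mul_cos_le_one (hr : 0 < ‖x - p‖)
    (hsupp : ∀ z ∈ C, inner ℝ (x - p) (z - p) ≤ ‖x - p‖ ^ 2) {α : ℝ} (hα : rot p α '' C = C)
    {θ a b : ℝ} (hu : p + (a + b * Complex.exp (θ * Complex.I)) * (x - p) ∈ C) :
    a * Real.cos α + b * Real.cos (θ - α) ≤ 1 := by
  have h := inner_rot_sub_le hsupp hα hu
  rw [rot_sub_self, add_sub_cancel_left, inner_mul_mul_self, inner_exp_add_mul_exp] at h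
  exact le_of_mul_le_mul_right (by simpa using h) (by positivity)

end Support

theorem exists_eq_of_mem_sector {p x u : ℂ} {k : ℕ} (hu : u ∈ sector p x k) :
    ∃ a b : ℝ, 0 ≤ a ∧ 0 ≤ b ∧
      u = p + (a + b * Complex.exp ((2 * Real.pi / k : ℝ) * Complex.I)) * (x - p) := by
  obtain ⟨a, b, ha, hb, rfl⟩ := hu
  exact ⟨a, b, ha, hb, by rw [rot_sub_self]; ring⟩

theorem dM_le_of_forall_coeff {C : Set ℂ} {p x : ℂ} {k : ℕ} {M : ℝ}
    (h : ∀ a b a' b' : ℝ, 0 ≤ a → 0 ≤ b → 0 ≤ a' → 0 ≤ b' →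
      p + (a + b * Complex.exp ((2 * Real.pi / k : ℝ) * Complex.I)) * (x - p) ∈ C →
      p + (a' + b' * Complex.exp ((2 * Real.pi / k : ℝ) * Complex.I)) * (x - p) ∈ C →
      (a - a') ^ 2 + (b - b') ^ 2 + 2 * Real.cos (2 * Real.pi / k) * (a - a') * (b - b') ≤ M) :
    dM C p x k ≤ √M * ‖x - p‖ := by
  refine diam_le_of_forall_dist_le (by positivity) fun u hu v hv => ?_
  obtain ⟨a, b, ha, hb, rfl⟩ := exists_eq_of_mem_sector hu.2
  obtain ⟨a', b', ha', hb', rfl⟩ := exists_eq_of_mem_sector hv.2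
  set e := Complex.exp ((2 * Real.pi / k : ℝ) * Complex.I)
  have hsq := h a b a' b' ha hb ha' hb' hu.1 hv.1
  rw [dist_eq_norm, show p + (a + b * e) * (x - p) - (p + (a' + b' * e) * (x - p)) =
    ((a - a' : ℝ) + (b - b' : ℝ) * e) * (x - p) by push_cast; ring, norm_mul]
  gcongr
  rw [← abs_norm]
  exact Real.abs_le_sqrt (by rwa [norm_add_mul_exp_sq])

theorem quadForm_sub_le_of_cos_nonneg {c a b a' b' : ℝ} (hc : 0 ≤ c)
    (ha : 0 ≤ a) (hb : 0 ≤ b) (ha' : 0 ≤ a') (hb' : 0 ≤ b')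
    (h₁ : a + b * c ≤ 1) (h₂ : a * c + b ≤ 1) (h₁' : a' + b' * c ≤ 1) (h₂' : a' * c + b' ≤ 1) :
    (a - a') ^ 2 + (b - b') ^ 2 + 2 * c * (a - a') * (b - b') ≤ 2 + 2 * c := by
  have ha1 : a ≤ 1 := by nlinarith
  have hb1 : b ≤ 1 := by nlinarith
  have ha1' : a' ≤ 1 := by nlinarith
  have hb1' : b' ≤ 1 := by nlinarith
  have hprod : (a - a') * (b - b') ≤ 1 := by nlinarith
  nlinarith [mul_le_mul_of_nonneg_left hprod hc]

-- the constraints cut out the quadrilateral `(0,0), (1,0), (4/3,2/3), (2/3,4/3), (0,1)`,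
-- and the convex form is at most `3` on differences of its vertices
theorem quadForm_sub_le_three {a b a' b' : ℝ}
    (ha : 0 ≤ a) (hb : 0 ≤ b) (ha' : 0 ≤ a') (hb' : 0 ≤ b')
    (h₁ : a - b / 2 ≤ 1) (h₂ : b - a / 2 ≤ 1) (h₃ : a + b ≤ 2)
    (h₁' : a' - b' / 2 ≤ 1) (h₂' : b' - a' / 2 ≤ 1) (h₃' : a' + b' ≤ 2) :
    (a - a') ^ 2 + (b - b') ^ 2 - (a - a') * (b - b') ≤ 3 := by
  have hg1 : 0 ≤ 2 - 2 * a + b := by linarith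
  have hg2 : 0 ≤ 2 - 2 * b + a := by linarith
  have hg3 : 0 ≤ 2 - a - b := by linarith
  have hg1' : 0 ≤ 2 - 2 * a' + b' := by linarith
  have hg2' : 0 ≤ 2 - 2 * b' + a' := by linarith
  have hg3' : 0 ≤ 2 - a' - b' := by linarith
  linarith [mul_nonneg hg1 ha, mul_nonneg hg1 hg1', mul_nonneg ha' hg1',
    mul_nonneg hg2' hg2, mul_nonneg hg2' ha, mul_nonneg hg2' hb',
    mul_nonneg (mul_nonneg hg1 hg2) ha, mul_nonneg (mul_nonneg hg1 hg2) hb,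
    mul_nonneg (mul_nonneg hg1 hg2) hg3', mul_nonneg (mul_nonneg hg1 ha) hg3,
    mul_nonneg (mul_nonneg hg1 ha) hg1', mul_nonneg (mul_nonneg hg1 ha) hb',
    mul_nonneg (mul_nonneg hg1 hg1') hg1, mul_nonneg (mul_nonneg hb hg2) hg3,
    mul_nonneg (mul_nonneg hb hg2) ha', mul_nonneg (mul_nonneg hb hg2) hb',
    mul_nonneg (mul_nonneg hb ha) hg3, mul_nonneg (mul_nonneg hb ha) ha',
    mul_nonneg (mul_nonneg hb ha) hb']

section Sector

variable {C : Set ℂ} {p x : ℂ}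

theorem dM_lt_of_four_le (hr : 0 < ‖x - p‖)
    (hsupp : ∀ z ∈ C, inner ℝ (x - p) (z - p) ≤ ‖x - p‖ ^ 2) {k : ℕ} (hsym : IsRotSym C p k)
    (hk : 4 ≤ k) : dM C p x k < 2 * ‖x - p‖ := by
  set θ := 2 * Real.pi / k
  have hθ0 : 0 < θ := by positivity
  have hθ : θ ≤ Real.pi / 2 := by
    rw [div_le_div_iff₀ (by positivity) two_pos]
    nlinarith [mul_le_mul_of_nonneg_left (by exact_mod_cast hk : (4 : ℝ) ≤ k) Real.pi_pos.le]
  have hc0 : 0 ≤ Real.cos θ := Real.cos_nonneg_of_neg_pi_div_two_le_of_le (by linarith) hθ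
  have hc1 : Real.cos θ < 1 := by
    simpa using Real.cos_lt_cos_of_nonneg_of_le_pi le_rfl (by linarith) hθ0
  calc dM C p x k ≤ √(2 + 2 * Real.cos θ) * ‖x - p‖ := by
        refine dM_le_of_forall_coeff fun a b a' b' ha hb ha' hb' hu hu' => ?_
        have h₁ := mul_cos_add_mul_cos_le_one hr hsupp (rot_zero_image p C) hu
        have h₂ := mul_cos_add_mul_cos_le_one hr hsupp hsym hu
        have h₁' := mul_cos_add_mul_cos_le_one hr hsupp (rot_zero_image p C) hu'
        have h₂' := mul_cos_add_mul_cos_le_one hr hsupp hsym hu'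
        simp only [Real.cos_zero, sub_zero, sub_self, mul_one] at h₁ h₂ h₁' h₂'
        exact quadForm_sub_le_of_cos_nonneg hc0 ha hb ha' hb' h₁ h₂ h₁' h₂'
    _ < 2 * ‖x - p‖ := by
        gcongr
        rw [Real.sqrt_lt' two_pos]
        linarith

theorem dM_three_lt (hr : 0 < ‖x - p‖)
    (hsupp : ∀ z ∈ C, inner ℝ (x - p) (z - p) ≤ ‖x - p‖ ^ 2) (hsym : IsRotSym C p 6) :
    dM C p x 3 < 2 * ‖x - p‖ := by
  have hsym3 : IsRotSym C p 3 := hsym.of_dvd (by norm_num) (by norm_num)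
  have hsym6 : rot p (Real.pi / 3) '' C = C := by
    rwa [IsRotSym, show 2 * Real.pi / (6 : ℕ) = Real.pi / 3 by push_cast; ring] at hsym
  have hcos : Real.cos (2 * Real.pi / (3 : ℕ)) = -(1 / 2) := by
    rw [show 2 * Real.pi / (3 : ℕ) = Real.pi - Real.pi / 3 by push_cast; ring, Real.cos_pi_sub,
      Real.cos_pi_div_three]
  have hcos' : Real.cos (2 * Real.pi / (3 : ℕ) - Real.pi / 3) = 1 / 2 := by
    rw [show 2 * Real.pi / (3 : ℕ) - Real.pi / 3 = Real.pi / 3 by push_cast; ring,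
      Real.cos_pi_div_three]
  calc dM C p x 3 ≤ √3 * ‖x - p‖ := by
        refine dM_le_of_forall_coeff fun a b a' b' ha hb ha' hb' hu hu' => ?_
        have h₁ := mul_cos_add_mul_cos_le_one hr hsupp (rot_zero_image p C) hu
        have h₂ := mul_cos_add_mul_cos_le_one hr hsupp hsym3 hu
        have h₃ := mul_cos_add_mul_cos_le_one hr hsupp hsym6 hu
        have h₁' := mul_cos_add_mul_cos_le_one hr hsupp (rot_zero_image p C) hu'
        have h₂' := mul_cos_add_mul_cos_le_one hr hsupp hsym3 hu'
        have h₃' := mul_cos_add_mul_cos_le_one hr hsupp hsym6 hu'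
        simp only [Real.cos_zero, sub_zero, sub_self, mul_one, hcos, hcos',
          Real.cos_pi_div_three] at h₁ h₂ h₃ h₁' h₂' h₃'
        rw [hcos]
        linarith [quadForm_sub_le_three ha hb ha' hb' (by linarith) (by linarith) (by linarith)
          (by linarith) (by linarith) (by linarith)]
    _ < 2 * ‖x - p‖ := by
        gcongr
        rw [Real.sqrt_lt' two_pos]
        norm_num

end Sector

theorem two_mul_norm_le_diam_inter_halfPlane {C : Set ℂ} {p x : ℂ} (hC : Bornology.IsBounded C)
    (hx : x ∈ C) (hsym : IsRotSym C p 2) :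
    2 * ‖x - p‖ ≤ diam (C ∩ {z : ℂ | 0 ≤ inner ℝ (Complex.I * (x - p)) (z - p)}) := by
  have hx' : 2 * p - x ∈ C := by
    rw [← hsym]
    refine ⟨x, hx, ?_⟩
    simp only [rot, Nat.cast_ofNat, mul_div_cancel_left₀ _ (two_ne_zero' ℝ),
      Complex.exp_pi_mul_I]
    ring
  have hline : ∀ t : ℝ, inner ℝ (Complex.I * (x - p)) (t * (x - p)) = 0 := fun t => by
    rw [inner_mul_mul_self]
    simp [Complex.inner]
  calc 2 * ‖x - p‖ = dist x (2 * p - x) := by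
        rw [dist_eq_norm, show x - (2 * p - x) = 2 * (x - p) by ring, norm_mul, Complex.norm_two]
    _ ≤ _ := by
        refine dist_le_diam_of_mem (hC.subset inter_subset_left) ⟨hx, ?_⟩ ⟨hx', ?_⟩
        · have h := hline 1
          rw [Complex.ofReal_one, one_mul] at h
          exact h.ge
        · show 0 ≤ inner ℝ _ (2 * p - x - p)
          rw [show 2 * p - x - p = ((-1 : ℝ) : ℂ) * (x - p) by push_cast; ring, hline]

theorem stmt_15_general (C : Set ℂ) (p x : ℂ) (kC : ℕ) (hC : IsConvexBody C)
    (hk2 : 2 < kC) (heven : 2 ∣ kC) (hsym : IsRotSym C p kC)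
    (hp : p ∈ interior C) (hx : x ∈ frontier C)
    (hxr : dist p x = infDist p (frontier C)) :
    ∀ k : ℕ, k ∣ kC → 2 < k →
      dM C p x k <
        Metric.diam
          (C ∩ {z : ℂ | 0 ≤ inner (𝕜 := ℝ) (Complex.I * (x - p)) (z - p)}) := by
  intro k hk hk2'
  obtain ⟨hCc, hCconv, -⟩ := hC
  have hxC : x ∈ C := hCc.isClosed.frontier_subset hx
  have hr : 0 < ‖x - p‖ := norm_pos_iff.2 <| sub_ne_zero.2 fun h => hx.2 (h ▸ hp)
  have hball : ball p ‖x - p‖ ⊆ C := by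
    obtain ⟨y, hy, hdist⟩ := hCc.exists_mem_frontier_infDist_compl_eq_dist (interior_subset hp)
    refine (ball_subset_ball ?_).trans ball_infDist_compl_subset
    rw [← dist_eq_norm, dist_comm, hxr, hdist]
    exact infDist_le_dist_of_mem hy
  have hsupp : ∀ z ∈ C, inner ℝ (x - p) (z - p) ≤ ‖x - p‖ ^ 2 :=
    fun z hz => inner_sub_le_norm_sq_of_ball_subset hCconv hball hx.2 hz
  have hsymd : ∀ d, d ∣ kC → IsRotSym C p d := fun d hd => hsym.of_dvd (by omega) hd
  calc dM C p x k < 2 * ‖x - p‖ := by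
        rcases (by omega : k = 3 ∨ 4 ≤ k) with rfl | hk4
        · exact dM_three_lt hr hsupp <| hsymd 6 <|
            Nat.Coprime.mul_dvd_of_dvd_of_dvd (by norm_num) heven hk
        · exact dM_lt_of_four_le hr hsupp (hsymd k hk) hk4
    _ ≤ _ := two_mul_norm_le_diam_inter_halfPlane hCc.isBounded hxC (hsymd 2 heven)

/-- For a multi-rotationally symmetric planar convex body with even maximal
degree `k_C > 2` which is not a closed disk centered at `p`, the maximum
relative diameter of the standard `2`-partition (the diameter of the
intersection of `C` with a closed half-plane bounded by the line through
`p` and `x`) is strictly larger than `d_M(P_k)` for every divisor `k > 2`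
of `k_C`. -/
theorem stmt_15 (C : Set ℂ) (p x : ℂ) (kC : ℕ) (hC : IsConvexBody C)
    (hk2 : 2 < kC) (heven : 2 ∣ kC) (hsym : IsRotSym C p kC)
    (hp : p ∈ interior C) (hx : x ∈ frontier C)
    (hxr : dist p x = infDist p (frontier C))
    (hdisk : ∀ ρ : ℝ, C ≠ Metric.closedBall p ρ) :
    ∀ k : ℕ, k ∣ kC → 2 < k →
      dM C p x k <
        Metric.diam
          (C ∩ {z : ℂ | 0 ≤ inner (𝕜 := ℝ) (Complex.I * (x - p)) (z - p)}) :=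
  stmt_15_general C p x kC hC hk2 heven hsym hp hx hxr
end

section
/- Let C be a planar convex body and p a point in its interior. If C is k-rotationally symmetric about p for every integer k ≥ 2, then C is a closed disk centered at p; that is, C equals the closed ball of center p and radius R = sup_{y ∈ C} dist(p, y). -/
/-!
The angles `θ` for which the rotation of angle `θ` about `p` maps `C` onto itself form an
additive subgroup of `ℝ`. It contains `2π/k` for every `k ≥ 2`, so it is dense, and it is closed
because `C` is; hence it is all of `ℝ`. A point `y` of `C` farthest from `p` therefore sweeps out
the whole circle of radius `dist p y` inside `C`, and convexity fills in the disk, as `p ∈ C`.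
-/

open Metric Set

lemma rot_zero (p : ℂ) : rot p 0 = id := by
  funext z
  simp [rot]

lemma rot_rot (p : ℂ) (α β : ℝ) (z : ℂ) : rot p α (rot p β z) = rot p (α + β) z := by
  simp only [rot, Complex.ofReal_add, add_mul, Complex.exp_add]
  ring

lemma continuous_rot_angle (p z : ℂ) : Continuous fun θ : ℝ => rot p θ z := by
  unfold rot
  fun_prop

def rotSymAngles (C : Set ℂ) (p : ℂ) : AddSubgroup ℝ where
  carrier := {θ | rot p θ '' C = C}
  zero_mem' := by simp [rot_zero]
  add_mem' := by
    intro α β (hα : rot p α '' C = C) (hβ : rot p β '' C = C)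
    change rot p (α + β) '' C = C
    rw [← funext (rot_rot p α β), ← image_image, hβ, hα]
  neg_mem' := by
    intro θ (hθ : rot p θ '' C = C)
    change rot p (-θ) '' C = C
    conv_lhs => rw [← hθ]
    simp only [image_image, rot_rot, neg_add_cancel, rot_zero, id, image_id']

lemma isClosed_rotSymAngles {C : Set ℂ} (hC : IsClosed C) (p : ℂ) :
    IsClosed (rotSymAngles C p : Set ℝ) := by
  have hcarrier : (rotSymAngles C p : Set ℝ) =
      ⋂ z ∈ C, {θ | rot p θ z ∈ C ∧ rot p (-θ) z ∈ C} := by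
    ext θ
    simp only [mem_iInter]
    constructor
    · intro hθ z hz
      have hθ' : rot p (-θ) '' C = C := (rotSymAngles C p).neg_mem hθ
      exact ⟨hθ ▸ mem_image_of_mem _ hz, hθ' ▸ mem_image_of_mem _ hz⟩
    · intro h
      refine (image_subset_iff.2 fun z hz => (h z hz).1).antisymm fun z hz => ?_
      exact ⟨rot p (-θ) z, (h z hz).2, by rw [rot_rot, add_neg_cancel, rot_zero, id]⟩
  rw [hcarrier]
  refine isClosed_biInter fun z _ => ?_
  exact (hC.preimage (continuous_rot_angle p z)).inter
    (hC.preimage ((continuous_rot_angle p z).comp continuous_neg))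

lemma dense_rotSymAngles {C : Set ℂ} {p : ℂ} (hsym : ∀ k : ℕ, 2 ≤ k → IsRotSym C p k) :
    Dense (rotSymAngles C p : Set ℝ) := by
  refine (rotSymAngles C p).dense_of_not_isolated_zero fun ε hε => ?_
  obtain ⟨n, hn⟩ := exists_nat_gt (2 * Real.pi / ε)
  refine ⟨2 * Real.pi / (n + 2 : ℕ), hsym (n + 2) (by omega), by positivity, ?_⟩
  rw [div_lt_iff₀ (by positivity)] at hn
  rw [div_lt_iff₀ (by positivity)]
  push_cast
  nlinarith

lemma rot_mem_of_forall_isRotSym {C : Set ℂ} {p z : ℂ} (hC : IsClosed C)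
    (hsym : ∀ k : ℕ, 2 ≤ k → IsRotSym C p k) (hz : z ∈ C) (θ : ℝ) : rot p θ z ∈ C := by
  have hθ : θ ∈ (rotSymAngles C p : Set ℝ) := by
    rw [← (isClosed_rotSymAngles hC p).closure_eq, (dense_rotSymAngles hsym).closure_eq]
    exact mem_univ θ
  exact (hθ : rot p θ '' C = C) ▸ mem_image_of_mem _ hz

lemma closedBall_subset_of_forall_rot_mem {C : Set ℂ} {p y : ℂ} (hconv : Convex ℝ C)
    (hp : p ∈ C) (hrot : ∀ θ : ℝ, rot p θ y ∈ C) : closedBall p (dist p y) ⊆ C := by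
  intro z hz
  rcases eq_or_ne y p with rfl | hyp
  · rw [dist_self, closedBall_zero, mem_singleton_iff] at hz
    exact hz ▸ hp
  set w := (z - p) / (y - p)
  have hw : ‖w‖ ≤ 1 := by
    rw [mem_closedBall, dist_comm p, dist_eq_norm, dist_eq_norm] at hz
    rwa [norm_div, div_le_one (norm_pos_iff.2 (sub_ne_zero.2 hyp))]
  have hz_eq : z = p + ‖w‖ • (rot p w.arg y - p) := by
    rw [Complex.real_smul, rot, add_sub_cancel_left, ← mul_assoc, Complex.norm_mul_exp_arg_mul_I,
      div_mul_cancel₀ _ (sub_ne_zero.2 hyp), add_sub_cancel]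
  exact hz_eq ▸ hconv.add_smul_sub_mem hp (hrot _) ⟨norm_nonneg w, hw⟩

lemma circumrad_eq_of_isMaxOn {C : Set ℂ} {p y : ℂ} (hy : y ∈ C)
    (hmax : IsMaxOn (dist p) C y) : circumrad C p = dist p y := by
  have hle : ∀ z, ⨆ _ : z ∈ C, dist p z ≤ dist p y := fun z =>
    Real.iSup_le (fun hz => hmax hz) dist_nonneg
  refine (Real.iSup_le hle dist_nonneg).antisymm ?_
  refine le_ciSup_of_le ⟨dist p y, forall_mem_range.2 hle⟩ y ?_
  rw [ciSup_pos hy]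

/-- A planar convex body that is `k`-rotationally symmetric about an interior
point `p` for every integer `k ≥ 2` is the closed disk centered at `p` of
radius `R = sup_{y ∈ C} dist p y`. -/
theorem stmt_16 (C : Set ℂ) (p : ℂ) (hC : IsConvexBody C) (hp : p ∈ interior C)
    (hsym : ∀ k : ℕ, 2 ≤ k → IsRotSym C p k) :
    C = Metric.closedBall p (circumrad C p) := by
  obtain ⟨hcompact, hconv, -⟩ := hC
  have hpC : p ∈ C := interior_subset hp
  obtain ⟨y, hy, hmax⟩ :=
    hcompact.exists_isMaxOn ⟨p, hpC⟩ (continuous_const.dist continuous_id).continuousOn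
  rw [circumrad_eq_of_isMaxOn hy hmax]
  refine Subset.antisymm (fun z hz => mem_closedBall'.2 (hmax hz)) ?_
  exact closedBall_subset_of_forall_rot_mem hconv hpC
    (rot_mem_of_forall_isRotSym hcompact.isClosed hsym hy)
end
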